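/- Let z = 1 + Re^{iθ} with 0 < R ≤ 1 and Re(z) ≥ 0. Then |p(z)| ≤ 1/√(2−R) + √R, where p(z) = (1+z)^{−1/2} + (1−z)^{1/2} with principal square roots. -/

import Mathlib

open Complex

noncomputable def pSOR (z : ℂ) : ℂ := (1 + z) ^ (-(1 / 2) : ℂ) + (1 - z) ^ ((1 : ℂ) / 2)

theorem stmt5 (R θ : ℝ) (hR0 : 0 < R) (hR1 : R ≤ 1)
    (z : ℂ) (hz : z = 1 + (R : ℂ) * Complex.exp ((θ : ℂ) * Complex.I))
    (hre : 0 ≤ z.re) :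
    ‖pSOR z‖ ≤ 1 / Real.sqrt (2 - R) + Real.sqrt R := by
  have habsE : ‖Complex.exp ((θ : ℂ) * Complex.I)‖ = 1 := by
    rw [Complex.norm_exp]
    simp
  have h1z : ‖1 - z‖ = R := by
    rw [hz]
    have : (1 : ℂ) - (1 + (R : ℂ) * Complex.exp ((θ : ℂ) * Complex.I))
        = -((R : ℂ) * Complex.exp ((θ : ℂ) * Complex.I)) := by ring
    rw [this, norm_neg, norm_mul, habsE, Complex.norm_real, Real.norm_eq_abs,
      abs_of_pos hR0, mul_one]
  have h2R : (0:ℝ) < 2 - R := by linarith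
  have hlow : 2 - R ≤ ‖1 + z‖ := by
    have : ‖(1 + z) + (1 - z)‖ ≤ ‖1 + z‖ + ‖1 - z‖ :=
      norm_add_le _ _
    simp only [h1z] at this
    have h2 : (1 + z) + (1 - z) = 2 := by ring
    rw [h2] at this
    simp only [Complex.norm_two] at this
    linarith
  have hz1 : (1 + z) ≠ 0 := by
    intro h
    rw [h, norm_zero] at hlow
    linarith
  have hz2 : (1 - z) ≠ 0 := by
    intro h
    rw [h, norm_zero] at h1z
    linarith
  have ha : ‖(1 + z) ^ (-(1 / 2) : ℂ)‖ = ‖1 + z‖ ^ (-(1/2) : ℝ) := by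
    rw [Complex.norm_cpow_of_ne_zero hz1]
    norm_num
  have hb : ‖(1 - z) ^ ((1:ℂ) / 2)‖ = Real.sqrt R := by
    rw [Complex.norm_cpow_of_ne_zero hz2]
    norm_num
    rw [h1z, ← Real.sqrt_eq_rpow]
  have hmono : ‖1 + z‖ ^ (-(1/2) : ℝ) ≤ (2 - R) ^ (-(1/2) : ℝ) :=
    Real.rpow_le_rpow_of_nonpos h2R hlow (by norm_num)
  have heq : (2 - R) ^ (-(1/2) : ℝ) = 1 / Real.sqrt (2 - R) := by
    rw [Real.rpow_neg h2R.le, ← Real.sqrt_eq_rpow, one_div]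
  calc ‖pSOR z‖ ≤ ‖(1 + z) ^ (-(1 / 2) : ℂ)‖
        + ‖(1 - z) ^ ((1:ℂ) / 2)‖ := norm_add_le _ _
    _ ≤ 1 / Real.sqrt (2 - R) + Real.sqrt R := by
        rw [ha, hb, ← heq]
        exact add_le_add_left hmono _
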